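/- Let S be a scope⁺-delimiting strategy for the decomposition ARS of infinite λ-terms such that the set of S-generated subterms of M is finite. Then the bottom-up construction of a derivation for ()M, which extends assumptions by the rule instance corresponding to the unique S-step (or S-steps, for applications) and stops extending an assumption as soon as an admissible repetition occurs below it (an earlier occurrence of the same sequent on the thread to the conclusion such that all intermediate sequents have prefix length ≥ that of the repeated sequent), terminates after finitely many extension steps. -/

import Mathlib

/-!
Every sequent on an `S`-rewrite sequence from `() M` lies in the finite set `R` of
`S`-reachable sequents, so it suffices to bound the length of lists over `R` without
admissible repetition. Split such a list at an occurrence of an element `x` of minimal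
prefix length: a second occurrence of `x` would be an admissible repetition, so both halves
are lists over `R \ {x}`, and induction gives the bound `2 ^ |R|`.
-/

/-- Node labels of (nameless, de Bruijn) infinite λ-terms. -/
inductive Lab : Type
  | lam : Lab
  | app : Lab
  | var : ℕ → Lab
deriving DecidableEq

/-- Which child positions a node with a given label may have. -/
def okChild : Lab → Bool → Prop
  | .lam, false => True
  | .app, _ => True
  | _, _ => False

/-- Infinite λ-terms (in nameless de Bruijn style), represented as
labelled possibly-infinite binary trees given by their labelling function. -/
structure Tm : Type where
  lab : List Bool → Option Lab
  root : (lab []).isSome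
  cons : ∀ p b, (lab (p ++ [b])).isSome ↔ ∃ l, lab p = some l ∧ okChild l b

namespace Tm

/-- Subterm at a position. -/
def sub (t : Tm) (p : List Bool) (h : (t.lab p).isSome) : Tm where
  lab q := t.lab (p ++ q)
  root := by simpa using h
  cons q b := by
    have h' := t.cons (p ++ q) b
    simpa [List.append_assoc] using h'

/-- Auxiliary: number of λ-labels strictly above, accumulating the prefix. -/
def ldepthAux (t : Tm) : List Bool → List Bool → ℕ
  | _, [] => 0
  | pre, b :: p => (if t.lab pre = some .lam then 1 else 0) + t.ldepthAux (pre ++ [b]) p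

/-- The number of λ-nodes strictly above position `p` in `t`. -/
def ldepth (t : Tm) (p : List Bool) : ℕ := t.ldepthAux [] p

end Tm

def shiftLab (σ : ℕ → ℕ) : Lab → Lab
  | .var k => .var (σ k)
  | l => l

theorem okChild_shiftLab (σ : ℕ → ℕ) (l : Lab) (b : Bool) :
    okChild (shiftLab σ l) b ↔ okChild l b := by
  cases l <;> cases b <;> simp [shiftLab, okChild]

/-- Relabel all variable nodes, depending on their λ-depth. -/
def Tm.mapVar (t : Tm) (σ : ℕ → ℕ → ℕ) : Tm where
  lab p := (t.lab p).map (shiftLab (σ (t.ldepth p)))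
  root := by
    have h := t.root
    cases hl : t.lab [] with
    | none => rw [hl] at h; simp at h
    | some l => simp [hl]
  cons p b := by
    constructor
    · intro hs
      have hs' : (t.lab (p ++ [b])).isSome := by simpa using hs
      obtain ⟨l', hl', hok⟩ := (t.cons p b).1 hs'
      exact ⟨shiftLab (σ (t.ldepth p)) l', by simp [hl'],
        (okChild_shiftLab _ _ _).2 hok⟩
    · rintro ⟨l', hl', hok⟩
      obtain ⟨l, hl, hfl⟩ := Option.map_eq_some_iff.mp (by simpa using hl')
      have hok' : okChild l b := by
        have := hfl ▸ hok
        exact (okChild_shiftLab (σ (t.ldepth p)) l b).1 this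
      have hs : (t.lab (p ++ [b])).isSome := (t.cons p b).2 ⟨l, hl, hok'⟩
      simpa using hs

/-- The term consisting of a single variable node with index 0. -/
def var0Tm : Tm where
  lab p := if p = [] then some (.var 0) else none
  root := by simp
  cons p b := by
    constructor
    · intro h
      simp only [List.append_eq_nil_iff] at h
      simp at h
    · rintro ⟨l, hl, hok⟩
      by_cases hp : p = []
      · subst hp
        simp only [if_pos rfl, Option.some.injEq] at hl
        cases hl
        cases b <;> simp [okChild] at hok
      · simp [hp] at hl

/-- The last-but-`j` abstraction-prefix variable occurs in `t`
(at λ-depth `d` inside the term it has de Bruijn index `j + d`). -/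
def OccursJ (j : ℕ) (t : Tm) : Prop := ∃ p, t.lab p = some (.var (j + t.ldepth p))

/-- Remove the prefix variable with base index `j` from the de Bruijn indexing. -/
def downJ (j : ℕ) (t : Tm) : Tm := t.mapVar (fun d k => if j + d < k then k - 1 else k)

/-- The last abstraction-prefix variable occurs. -/
def occurs0 : Tm → Prop := OccursJ 0

/-- Remove the (vacuous) last abstraction-prefix variable. -/
def down0 : Tm → Tm := downJ 0

/-- `t` has no free variables pointing outside the term itself. -/
def ClosedTm (t : Tm) : Prop := ∀ p k, t.lab p = some (.var k) → k < t.ldepth p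

/-- Sequents: a prefix length together with an infinite λ-term. -/
abbrev TSeq : Type := ℕ × Tm

/-- λ-decomposition step of the ARS `Reg⁺`. -/
def SLam (s s' : TSeq) : Prop :=
  s.2.lab [] = some .lam ∧ s'.1 = s.1 + 1 ∧
    ∃ h : (s.2.lab [false]).isSome, s'.2 = s.2.sub [false] h

/-- Left application-decomposition step. -/
def SApp0 (s s' : TSeq) : Prop :=
  s.2.lab [] = some .app ∧ s'.1 = s.1 ∧
    ∃ h : (s.2.lab [false]).isSome, s'.2 = s.2.sub [false] h

/-- Right application-decomposition step. -/
def SApp1 (s s' : TSeq) : Prop :=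
  s.2.lab [] = some .app ∧ s'.1 = s.1 ∧
    ∃ h : (s.2.lab [true]).isSome, s'.2 = s.2.sub [true] h

/-- Vacuous-prefix removal step (removal of the last prefix variable). -/
def SDel (s s' : TSeq) : Prop :=
  s.1 = s'.1 + 1 ∧ ¬ occurs0 s.2 ∧ s'.2 = down0 s.2

/-- The scope⁺-decomposition ARS `Reg⁺` on prefixed infinite λ-terms. -/
def Step (s s' : TSeq) : Prop := SLam s s' ∨ SApp0 s s' ∨ SApp1 s s' ∨ SDel s s'

/-- A (scope⁺-delimiting) strategy for the ARS `Reg⁺`: a sub-ARS with the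
same objects and the same normal forms. -/
def Strategy (S : TSeq → TSeq → Prop) : Prop :=
  (∀ a b, S a b → Step a b) ∧ (∀ a, (∃ b, Step a b) → ∃ b, S a b)

/-- An infinite λ-term is strongly regular if some scope⁺-delimiting strategy
reaches only finitely many sequents from it. -/
def StronglyRegular (M : Tm) : Prop :=
  ∃ S : TSeq → TSeq → Prop, Strategy S ∧ {s | Relation.ReflTransGen S (0, M) s}.Finite

/-- A list of sequents contains an *admissible repetition*: two equal entries
such that all entries in between have abstraction prefix at least as long as
the repeated one. -/
def HasAdmRep (l : List TSeq) : Prop :=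
  ∃ i j : Fin l.length, i < j ∧ l.get i = l.get j ∧
    ∀ k : Fin l.length, i ≤ k → k ≤ j → (l.get i).1 ≤ (l.get k).1

section AdmissibleRepetition

variable {α : Type*} (lev : α → ℕ)

/-- `HasAdmRep` in infix form, with an arbitrary level function in place of the prefix
length. -/
def HasAdmRepBy (l : List α) : Prop :=
  ∃ x m, x :: (m ++ [x]) <:+: l ∧ ∀ y ∈ m, lev x ≤ lev y

variable {lev}

theorem HasAdmRepBy.mono {l l' : List α} (h : HasAdmRepBy lev l) (hl : l <:+: l') :
    HasAdmRepBy lev l' :=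
  let ⟨x, m, hx, hm⟩ := h
  ⟨x, m, hx.trans hl, hm⟩

theorem hasAdmRepBy_cons_of_mem {x : α} {l : List α} (hx : x ∈ l)
    (hmin : ∀ y ∈ l, lev x ≤ lev y) : HasAdmRepBy lev (x :: l) := by
  obtain ⟨s, t, rfl⟩ := List.append_of_mem hx
  exact ⟨x, s, ⟨[], t, by simp⟩, fun y hy => hmin y (by simp [hy])⟩

theorem notMem_of_not_hasAdmRepBy {s t : List α} {x : α}
    (h : ¬ HasAdmRepBy lev (s ++ x :: t)) (hmin : ∀ y ∈ s ++ x :: t, lev x ≤ lev y) :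
    x ∉ s ∧ x ∉ t := by
  refine ⟨fun hs => ?_, fun ht => ?_⟩
  · obtain ⟨a, b, rfl⟩ := List.append_of_mem hs
    have hrep : HasAdmRepBy lev (x :: (b ++ x :: t)) :=
      hasAdmRepBy_cons_of_mem (by simp) fun y hy => hmin y (by simp_all)
    exact h (hrep.mono ⟨a, [], by simp⟩)
  · refine h ((hasAdmRepBy_cons_of_mem ht fun y hy => hmin y (by simp [hy])).mono ?_)
    exact ⟨s, [], by simp⟩

theorem length_lt_two_pow_of_not_hasAdmRepBy [DecidableEq α] (l : List α)
    (h : ¬ HasAdmRepBy lev l) : l.length < 2 ^ l.toFinset.card := by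
  induction hn : l.length using Nat.strong_induction_on generalizing l with
  | _ n ih =>
  subst hn
  rcases eq_or_ne l [] with rfl | hne
  · simp
  obtain ⟨x, hx, hmin⟩ := l.toFinset.exists_min_image lev
    ((List.toFinset_nonempty_iff l).2 hne)
  obtain ⟨s, t, rfl⟩ := List.append_of_mem (List.mem_toFinset.1 hx)
  obtain ⟨hs, ht⟩ := notMem_of_not_hasAdmRepBy h fun y hy => hmin y (List.mem_toFinset.2 hy)
  have hcard (u : List α) (hu : u <:+: s ++ x :: t) (hxu : x ∉ u) :
      2 ^ u.toFinset.card ≤ 2 ^ ((s ++ x :: t).toFinset.card - 1) := by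
    rw [← Finset.card_erase_of_mem hx]
    refine Nat.pow_le_pow_right two_pos (Finset.card_le_card fun y hy => ?_)
    rw [List.mem_toFinset] at hy
    exact Finset.mem_erase.2 ⟨by rintro rfl; exact hxu hy, List.mem_toFinset.2 (hu.subset hy)⟩
  have hs_infix : s <:+: s ++ x :: t := ⟨[], x :: t, by simp⟩
  have ht_infix : t <:+: s ++ x :: t := ⟨s ++ [x], [], by simp⟩
  have hs_len := ih _ (by simp) s (fun h' => h (h'.mono hs_infix)) rfl
  have ht_len := ih _ (by simp; omega) t (fun h' => h (h'.mono ht_infix)) rfl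
  have hpos : 0 < (s ++ x :: t).toFinset.card := Finset.card_pos.2 ⟨x, hx⟩
  calc (s ++ x :: t).length = s.length + t.length + 1 := by simp; omega
    _ < 2 ^ ((s ++ x :: t).toFinset.card - 1) + 2 ^ ((s ++ x :: t).toFinset.card - 1) := by
      have := hcard s hs_infix hs
      have := hcard t ht_infix ht
      omega
    _ = 2 ^ (s ++ x :: t).toFinset.card := by
      rw [← two_mul, ← pow_succ', Nat.sub_add_cancel hpos]

theorem Set.Finite.setOf_not_hasAdmRepBy {s : Set α} (hs : s.Finite) :
    {l : List α | (∀ x ∈ l, x ∈ s) ∧ ¬ HasAdmRepBy lev l}.Finite := by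
  classical
  have : Finite s := hs.to_subtype
  refine ((List.finite_length_lt s (2 ^ hs.toFinset.card)).image (List.map Subtype.val)).subset ?_
  rintro l ⟨hls, hl⟩
  lift l to List s using hls
  refine ⟨l, ?_, rfl⟩
  calc l.length = (l.map Subtype.val).length := (List.length_map _).symm
    _ < 2 ^ (l.map Subtype.val).toFinset.card := length_lt_two_pow_of_not_hasAdmRepBy _ hl
    _ ≤ 2 ^ hs.toFinset.card := Nat.pow_le_pow_right two_pos <| Finset.card_le_card
      fun y hy => by
        obtain ⟨hy, -⟩ := by simpa using List.mem_toFinset.1 hy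
        simpa using hy

end AdmissibleRepetition

theorem hasAdmRep_of_hasAdmRepBy {l : List TSeq} (h : HasAdmRepBy Prod.fst l) :
    HasAdmRep l := by
  obtain ⟨x, m, hinf, hm⟩ := h
  obtain ⟨k, hk, hget⟩ := List.infix_iff_getElem?.1 hinf
  set w := x :: (m ++ [x])
  have hwlen : w.length = m.length + 2 := by simp [w]
  have hlw (i : ℕ) (hi : i < w.length) : l[i + k]'(by omega) = w[i] := by
    simpa [List.getElem?_eq_getElem (show i + k < l.length by omega)] using hget i hi
  have hwmin (y : TSeq) (hy : y ∈ w) : x.1 ≤ y.1 := by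
    simp only [w, List.mem_cons, List.mem_append, List.not_mem_nil, or_false] at hy
    rcases hy with rfl | hy | rfl
    exacts [le_rfl, hm y hy, le_rfl]
  have hfirst : l[k]'(by omega) = x := by simpa [w] using hlw 0 (by omega)
  have hlast : l[m.length + 1 + k]'(by omega) = x := by
    simpa [w] using hlw (m.length + 1) (by omega)
  refine ⟨⟨k, by omega⟩, ⟨m.length + 1 + k, by omega⟩, by simp [Fin.lt_def], ?_, ?_⟩
  · simp only [List.get_eq_getElem, hfirst, hlast]
  · rintro ⟨i, hi⟩ hki hij
    simp only [Fin.le_def] at hki hij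
    simp only [List.get_eq_getElem, hfirst]
    obtain ⟨j, rfl⟩ : ∃ j, i = j + k := ⟨i - k, by omega⟩
    rw [hlw j (by omega)]
    exact hwmin _ (List.getElem_mem _)

theorem stmt9_general (M : Tm) (S : TSeq → TSeq → Prop)
    (hfin : {s | Relation.ReflTransGen S ((0 : ℕ), M) s}.Finite) :
    {l : List TSeq | List.Chain S ((0 : ℕ), M) l ∧
      ¬ HasAdmRep (((0 : ℕ), M) :: l)}.Finite := by
  refine ((hfin.setOf_not_hasAdmRepBy (lev := Prod.fst)).image List.tail).subset ?_
  rintro l ⟨hchain, hl⟩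
  refine ⟨((0 : ℕ), M) :: l, ⟨?_, fun h => hl (hasAdmRep_of_hasAdmRepBy h)⟩, rfl⟩
  exact List.IsChain.induction _ _ hchain (fun _ _ hxy hx => hx.tail hxy) fun _ => .refl

/-- Let `S` be a scope⁺-delimiting strategy whose set of
reachable sequents from `() M` is finite.  Then the bottom-up construction of
a `Reg₀⁺`-derivation for `() M`, which extends each open assumption by the
rule instance corresponding to an `S`-step and stops a thread as soon as an
admissible repetition occurs on it, terminates: there are only finitely many
finite `S`-rewrite sequences from `() M` without an admissible repetition
(these are exactly the threads along which the construction keeps extending). -/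
theorem stmt9 (M : Tm) (hM : ClosedTm M) (S : TSeq → TSeq → Prop) (hS : Strategy S)
    (hfin : {s | Relation.ReflTransGen S ((0 : ℕ), M) s}.Finite) :
    {l : List TSeq | List.Chain S ((0 : ℕ), M) l ∧
      ¬ HasAdmRep (((0 : ℕ), M) :: l)}.Finite :=
  stmt9_general M S hfin
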